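/- Let d ≥ 2 be even and set n = d/2. Let s be the constant sign sequence with s_i = +1 for all 0 ≤ i ≤ d. Then z_i(s) = 0 for 0 ≤ i ≤ n−1 and z_n(s) = 1; that is, the improper involutor (0,…,0,1) corresponds to the all-plus sign sequence. -/

import Mathlib

open MvPolynomial Finset

/-- A sign sequence for `d`: values `±1` with `s_{d−i} = (−1)^d s_i`. -/
def SignSeq (d : ℕ) (s : ℕ → ℂ) : Prop :=
  ∀ i ≤ d, (s i = 1 ∨ s i = -1) ∧ s (d - i) = (-1 : ℂ) ^ d * s i

/-- `m_ℓ` is `1/2` if `d = 2ℓ` and `1` otherwise. -/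
noncomputable def mcoef (d l : ℕ) : ℂ := if d = 2 * l then 1 / 2 else 1

noncomputable def E1 (d i : ℕ) : ℂ :=
  ((d.factorial : ℂ) * ((2 * d - 4 * i + 1).factorial : ℂ)) /
    ((2 : ℂ) ^ (2 * (i : ℤ) - 1) * ((d - 2 * i).factorial : ℂ) ^ 2)

noncomputable def E2 (d : ℕ) (s : ℕ → ℂ) (i : ℕ) : ℂ :=
  ∑ e ∈ range (i + 1), ∑ l ∈ range (d / 2 + 1), ∑ p ∈ range (l + 1),
    ∑ q ∈ range (d - l + 1),
      if p + q = d - 2 * e then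
        s l * mcoef d l * (-1 : ℂ) ^ q *
            (((d - 2 * e).factorial : ℂ) * ((d - i - e).factorial : ℂ)) /
          (((2 * d - 2 * i - 2 * e + 1).factorial : ℂ) * ((i - e).factorial : ℂ) *
            (p.factorial : ℂ) * (q.factorial : ℂ) * ((l - p).factorial : ℂ) *
            ((d - l - q).factorial : ℂ))
      else 0

/-- `z_i(s) = E_{1,i} · E_{2,i}`. -/
noncomputable def zfun (d : ℕ) (s : ℕ → ℂ) (i : ℕ) : ℂ := E1 d i * E2 d s i


/-! With all signs `+1`, the factorials in `E2` assemble into `C(d,ℓ) C(ℓ,p) C(d-ℓ,q) / d!`, so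
the sum over `p + q = d - 2e` is `C(d,ℓ)` times the coefficient of `X^(d-2e)` in
`(1+X)^ℓ (1-X)^(d-ℓ)`. For `d = 2n` and even degree this is symmetric under `ℓ ↦ d - ℓ`, and the
weights `m_ℓ` make the sum over `ℓ ≤ n` half the full sum over `ℓ ≤ d`, i.e. half the coefficient
of `X^(d-2e)` in `((1+X) + (1-X))^d = 2^d`. Only `e = n` survives, so `E2_n = 2^(d-1) / d!`, which
is the reciprocal of `E1_n = 2 d! / 2^d`. -/

namespace Polynomial

variable {R : Type*} [CommRing R]

theorem coeff_one_add_X_pow_mul_one_sub_X_pow (a b k : ℕ) :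
    ((1 + X) ^ a * (1 - X) ^ b : R[X]).coeff k =
      ∑ p ∈ range (a + 1), ∑ q ∈ range (b + 1),
        if p + q = k then (a.choose p : R) * (-1) ^ q * (b.choose q : R) else 0 := by
  rw [add_comm, add_pow, sub_eq_neg_add, add_pow, sum_mul_sum, finsetSum_coeff]
  refine sum_congr rfl fun p _ => ?_
  rw [finsetSum_coeff]
  refine sum_congr rfl fun q _ => ?_
  have hmonomial :
      X ^ p * 1 ^ (a - p) * (a.choose p : R[X]) * ((-X) ^ q * 1 ^ (b - q) * (b.choose q : R[X])) =
        C ((a.choose p : R) * (-1) ^ q * (b.choose q : R)) * X ^ (p + q) := by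
    simp only [map_mul, map_pow, map_neg, map_one, map_natCast, neg_pow (X : R[X]), one_pow]
    ring
  rw [hmonomial, coeff_C_mul_X_pow]
  exact if_congr eq_comm rfl rfl

theorem coeff_one_add_X_pow_mul_one_sub_X_pow_comm {k : ℕ} (hk : Even k) (a b : ℕ) :
    ((1 + X) ^ a * (1 - X) ^ b : R[X]).coeff k = ((1 + X) ^ b * (1 - X) ^ a : R[X]).coeff k := by
  rw [coeff_one_add_X_pow_mul_one_sub_X_pow, coeff_one_add_X_pow_mul_one_sub_X_pow, sum_comm]
  refine sum_congr rfl fun q _ => sum_congr rfl fun p _ => ?_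
  rw [add_comm q p]
  split_ifs with hpq
  · have hparity : p % 2 = q % 2 := by obtain ⟨j, rfl⟩ := hk; omega
    rw [neg_one_pow_eq_pow_mod_two (n := p), neg_one_pow_eq_pow_mod_two (n := q), hparity]
    ring
  · rfl

theorem sum_choose_mul_coeff_one_add_X_pow_mul_one_sub_X_pow (d k : ℕ) :
    ∑ l ∈ range (d + 1), (d.choose l : R) * ((1 + X) ^ l * (1 - X) ^ (d - l) : R[X]).coeff k =
      if k = 0 then 2 ^ d else 0 := by
  have hbinomial : ∑ l ∈ range (d + 1), (1 + X) ^ l * (1 - X) ^ (d - l) * (d.choose l : R[X]) =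
      C (2 ^ d) := by
    rw [← add_pow, map_pow, map_ofNat]
    ring
  rw [← coeff_C, ← hbinomial, finsetSum_coeff]
  simp only [coeff_mul_natCast]
  exact sum_congr rfl fun _ _ => mul_comm _ _

end Polynomial

open Polynomial Nat

theorem sum_range_mcoef_mul_of_symm (n : ℕ) (f : ℕ → ℂ) (hf : ∀ l ≤ 2 * n, f (2 * n - l) = f l) :
    ∑ l ∈ range (n + 1), mcoef (2 * n) l * f l = (∑ l ∈ range (2 * n + 1), f l) / 2 := by
  have hfold : ∑ l ∈ range (2 * n + 1), f l = ∑ l ∈ range (n + 1), f l + ∑ l ∈ range n, f l := by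
    rw [show 2 * n + 1 = (n + 1) + n by omega, sum_range_add, ← sum_range_reflect f n]
    congr 1
    refine sum_congr rfl fun j hj => ?_
    have hj := mem_range.1 hj
    rw [← hf _ (by omega)]
    congr 1
    omega
  have hweights : ∑ l ∈ range (n + 1), mcoef (2 * n) l * f l = ∑ l ∈ range n, f l + f n / 2 := by
    rw [sum_range_succ, mcoef, if_pos rfl]
    congr 1
    · refine sum_congr rfl fun l hl => ?_
      rw [mcoef, if_neg (by have := mem_range.1 hl; omega), one_mul]
    · ring
  rw [hweights, hfold, sum_range_succ]
  ring

theorem E2_const_one (d i : ℕ) :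
    E2 d (fun _ => 1) i = ∑ e ∈ range (i + 1),
      ((d - 2 * e)! * (d - i - e)! / ((2 * d - 2 * i - 2 * e + 1)! * (i - e)! * d !) : ℂ) *
        ∑ l ∈ range (d / 2 + 1),
          mcoef d l * d.choose l *
            ((1 + Polynomial.X) ^ l * (1 - Polynomial.X) ^ (d - l) : ℂ[X]).coeff (d - 2 * e) := by
  unfold E2
  refine sum_congr rfl fun e _ => ?_
  rw [mul_sum]
  refine sum_congr rfl fun l hl => ?_
  have hl : l ≤ d := by have := mem_range.1 hl; omega
  simp only [coeff_one_add_X_pow_mul_one_sub_X_pow, mul_sum]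
  refine sum_congr rfl fun p hp => sum_congr rfl fun q hq => ?_
  split_ifs
  · rw [cast_choose ℂ hl, cast_choose ℂ (mem_range_succ_iff.1 hp),
      cast_choose ℂ (mem_range_succ_iff.1 hq)]
    have hfact (m : ℕ) : (m ! : ℂ) ≠ 0 := Nat.cast_ne_zero.2 m.factorial_ne_zero
    field_simp [hfact]
  · simp

theorem sum_range_mcoef_mul_choose_mul_coeff {k : ℕ} (hk : Even k) (n : ℕ) :
    ∑ l ∈ range (n + 1), mcoef (2 * n) l * (2 * n).choose l *
        ((1 + Polynomial.X) ^ l * (1 - Polynomial.X) ^ (2 * n - l) : ℂ[X]).coeff k =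
      if k = 0 then 2 ^ (2 * n) / 2 else 0 := by
  simp_rw [mul_assoc]
  rw [sum_range_mcoef_mul_of_symm, sum_choose_mul_coeff_one_add_X_pow_mul_one_sub_X_pow]
  · split_ifs <;> simp
  · intro l hl
    rw [choose_symm hl, Nat.sub_sub_self hl, coeff_one_add_X_pow_mul_one_sub_X_pow_comm hk]

theorem E2_two_mul_const_one {n i : ℕ} (hi : i ≤ n) :
    E2 (2 * n) (fun _ => 1) i = if i = n then 2 ^ (2 * n) / (2 * (2 * n)! : ℂ) else 0 := by
  rw [E2_const_one, show 2 * n / 2 = n by omega]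
  calc _ = ∑ e ∈ range (i + 1), if n = e then 2 ^ (2 * n) / (2 * (2 * n)! : ℂ) else 0 :=
        sum_congr rfl fun e he => ?_
    _ = _ := by
        rw [sum_ite_eq]
        exact if_congr (by rw [mem_range]; omega) rfl rfl
  have he : e ≤ i := mem_range_succ_iff.1 he
  rw [sum_range_mcoef_mul_choose_mul_coeff ⟨n - e, by omega⟩]
  by_cases hen : n = e
  · obtain rfl : i = n := by omega
    subst hen
    rw [show 2 * i - 2 * i = 0 by omega, show 2 * i - i - i = 0 by omega,
      show 2 * (2 * i) - 2 * i - 2 * i + 1 = 1 by omega, Nat.sub_self]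
    simp only [factorial_zero, cast_one, mul_one, factorial_one, one_mul, one_div, ↓reduceIte]
    ring
  · rw [if_neg (by omega), if_neg hen, mul_zero]

theorem E1_two_mul_self (n : ℕ) : E1 (2 * n) n = 2 * (2 * n)! / 2 ^ (2 * n) := by
  have hpow : (2 : ℂ) ^ (2 * (n : ℤ) - 1) = 2 ^ (2 * n) / 2 := by
    rw [zpow_sub₀ two_ne_zero, zpow_one, ← zpow_natCast]
    push_cast
    rfl
  rw [E1, hpow, show 2 * (2 * n) - 4 * n = 0 by omega, Nat.sub_self]
  simp only [zero_add, factorial_one, cast_one, mul_one, factorial_zero, one_pow]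
  ring

theorem stmt6_general (d : ℕ) (hdev : Even d) :
    (∀ i < d / 2, zfun d (fun _ => (1 : ℂ)) i = 0) ∧
    zfun d (fun _ => (1 : ℂ)) (d / 2) = 1 := by
  obtain ⟨n, rfl⟩ : ∃ n, d = 2 * n := hdev.two_dvd
  rw [show 2 * n / 2 = n by omega]
  refine ⟨fun i hi => ?_, ?_⟩
  · rw [zfun, E2_two_mul_const_one hi.le, if_neg hi.ne, mul_zero]
  · rw [zfun, E2_two_mul_const_one le_rfl, if_pos rfl, E1_two_mul_self]
    field_simp
    exact div_self (Nat.cast_ne_zero.2 (factorial_ne_zero _))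

/-- for even `d`, the improper involutor `(0,…,0,1)` corresponds to the
all-plus sign sequence: `z_i(+,…,+) = 0` for `i < n` and `z_n(+,…,+) = 1`, `n = d/2`. -/
theorem stmt6 (d : ℕ) (hd : 2 ≤ d) (hdev : Even d) :
    (∀ i < d / 2, zfun d (fun _ => (1 : ℂ)) i = 0) ∧
    zfun d (fun _ => (1 : ℂ)) (d / 2) = 1 :=
  stmt6_general d hdev
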